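/- For every R > 0, the matrix z_NA(R) is the unique global maximizer of z ↦ g_NA(z, R) over all 2×2 real matrices. -/

import Mathlib

/-- The Principal's reduced objective `g_NA(z, R)` in the no-Planner (Nash) model. -/
noncomputable def gNA (k11 k12 k21 k22 : ℝ) (z : Fin 2 → Fin 2 → ℝ) (R : ℝ) : ℝ :=
  -(R / 2) * (z 0 0 + z 0 1 - 1) ^ 2 - (R / 2) * (z 1 0 + z 1 1 - 1) ^ 2
    + z 0 0 / k11 + z 0 1 / k12 + z 1 0 / k21 + z 1 1 / k22
    - (z 0 0) ^ 2 / (2 * k11) - (z 0 1) ^ 2 / (2 * k12)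
    - (z 1 0) ^ 2 / (2 * k21) - (z 1 1) ^ 2 / (2 * k22)

/-- The optimal sensitivities `z_NA(R)` in the no-Planner (Nash) model. -/
noncomputable def zNA (k11 k12 k21 k22 R : ℝ) : Fin 2 → Fin 2 → ℝ :=
  ![![(1 + R * k12) / (1 + R * (k11 + k12)), (1 + R * k11) / (1 + R * (k11 + k12))],
    ![(1 + R * k22) / (1 + R * (k21 + k22)), (1 + R * k21) / (1 + R * (k21 + k22))]]

/-!
`g_NA(z, R)` is the sum of two copies of the concave quadratic
`φ(x, y) = -(R/2)(x + y - 1)² + x/a + y/b - x²/(2a) - y²/(2b)`, one for each row of `z`.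
Expanding `φ` around a stationary point `(x₀, y₀)` (`∂φ/∂x = ∂φ/∂y = 0`, which after scaling by
`a` and `b` reads `1 - x₀ = aR(x₀ + y₀ - 1)`, `1 - y₀ = bR(x₀ + y₀ - 1)`) leaves only the (negated) quadratic part,
`φ(x₀, y₀) - φ(x, y) = (R/2)(dx + dy)² + dx²/(2a) + dy²/(2b)`, which is positive definite for
`a, b > 0`, `R ≥ 0`; the rows of `z_NA(R)` are exactly the stationary points of the two copies.
-/

noncomputable def rowObjective (a b R x y : ℝ) : ℝ :=
  -(R / 2) * (x + y - 1) ^ 2 + x / a + y / b - x ^ 2 / (2 * a) - y ^ 2 / (2 * b)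

theorem gNA_eq_rowObjective_add (k11 k12 k21 k22 : ℝ) (z : Fin 2 → Fin 2 → ℝ) (R : ℝ) :
    gNA k11 k12 k21 k22 z R =
      rowObjective k11 k12 R (z 0 0) (z 0 1) + rowObjective k21 k22 R (z 1 0) (z 1 1) := by
  unfold gNA rowObjective
  ring

section Stationary

variable {a b R x₀ y₀ : ℝ}

theorem rowObjective_sub_eq_of_stationary (ha : a ≠ 0) (hb : b ≠ 0)
    (hx₀ : 1 - x₀ = a * R * (x₀ + y₀ - 1)) (hy₀ : 1 - y₀ = b * R * (x₀ + y₀ - 1)) (x y : ℝ) :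
    rowObjective a b R x₀ y₀ - rowObjective a b R x y =
      R / 2 * (x - x₀ + (y - y₀)) ^ 2 + (x - x₀) ^ 2 / (2 * a) + (y - y₀) ^ 2 / (2 * b) := by
  unfold rowObjective
  field_simp
  linear_combination (-2 * b * (x - x₀)) * hx₀ + (-2 * a * (y - y₀)) * hy₀

theorem rowObjective_le_of_stationary (ha : 0 < a) (hb : 0 < b) (hR : 0 ≤ R)
    (hx₀ : 1 - x₀ = a * R * (x₀ + y₀ - 1)) (hy₀ : 1 - y₀ = b * R * (x₀ + y₀ - 1)) (x y : ℝ) :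
    rowObjective a b R x y ≤ rowObjective a b R x₀ y₀ := by
  have h := rowObjective_sub_eq_of_stationary ha.ne' hb.ne' hx₀ hy₀ x y
  have : 0 ≤ R / 2 * (x - x₀ + (y - y₀)) ^ 2 + (x - x₀) ^ 2 / (2 * a) + (y - y₀) ^ 2 / (2 * b) := by
    positivity
  linarith

theorem eq_of_stationary_rowObjective_le (ha : 0 < a) (hb : 0 < b) (hR : 0 ≤ R)
    (hx₀ : 1 - x₀ = a * R * (x₀ + y₀ - 1)) (hy₀ : 1 - y₀ = b * R * (x₀ + y₀ - 1)) {x y : ℝ}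
    (h : rowObjective a b R x₀ y₀ ≤ rowObjective a b R x y) : x = x₀ ∧ y = y₀ := by
  have hsub := rowObjective_sub_eq_of_stationary ha.ne' hb.ne' hx₀ hy₀ x y
  have hsum : 0 ≤ R / 2 * (x - x₀ + (y - y₀)) ^ 2 := by positivity
  have hx : 0 ≤ (x - x₀) ^ 2 / (2 * a) := by positivity
  have hy : 0 ≤ (y - y₀) ^ 2 / (2 * b) := by positivity
  have hx0 : (x - x₀) ^ 2 / (2 * a) = 0 := by linarith
  have hy0 : (y - y₀) ^ 2 / (2 * b) = 0 := by linarith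
  simp only [div_eq_zero_iff, pow_eq_zero_iff two_ne_zero, sub_eq_zero, mul_eq_zero,
    two_ne_zero, ha.ne', hb.ne', or_false] at hx0 hy0
  exact ⟨hx0, hy0⟩

end Stationary

theorem nashRow_stationary {a b R : ℝ} (hD : 1 + R * (a + b) ≠ 0) :
    let x₀ := (1 + R * b) / (1 + R * (a + b))
    let y₀ := (1 + R * a) / (1 + R * (a + b))
    1 - x₀ = a * R * (x₀ + y₀ - 1) ∧ 1 - y₀ = b * R * (x₀ + y₀ - 1) := by
  constructor <;> field_simp <;> ring

/-- for every `R > 0`, `z_NA(R)` is the unique global maximizer of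
`z ↦ g_NA(z, R)`: it maximizes `g_NA(·, R)` and any global maximizer equals it. -/
theorem zNA_unique_maximizer (k11 k12 k21 k22 : ℝ)
    (hk11 : 0 < k11) (hk12 : 0 < k12) (hk21 : 0 < k21) (hk22 : 0 < k22)
    (R : ℝ) (hR : 0 < R) :
    (∀ z : Fin 2 → Fin 2 → ℝ,
        gNA k11 k12 k21 k22 z R ≤ gNA k11 k12 k21 k22 (zNA k11 k12 k21 k22 R) R) ∧
      (∀ z : Fin 2 → Fin 2 → ℝ,
        (∀ w : Fin 2 → Fin 2 → ℝ, gNA k11 k12 k21 k22 w R ≤ gNA k11 k12 k21 k22 z R) →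
          z = zNA k11 k12 k21 k22 R) := by
  obtain ⟨hx₀, hy₀⟩ := nashRow_stationary (a := k11) (b := k12) (R := R) (by positivity)
  obtain ⟨hx₁, hy₁⟩ := nashRow_stationary (a := k21) (b := k22) (R := R) (by positivity)
  have le₀ := rowObjective_le_of_stationary hk11 hk12 hR.le hx₀ hy₀
  have le₁ := rowObjective_le_of_stationary hk21 hk22 hR.le hx₁ hy₁
  simp only [gNA_eq_rowObjective_add]
  refine ⟨fun z => add_le_add (le₀ _ _) (le₁ _ _), fun z hz => ?_⟩
  have hmax := hz (zNA k11 k12 k21 k22 R)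
  simp only [zNA, Matrix.cons_val_zero, Matrix.cons_val_one] at hmax
  obtain ⟨e00, e01⟩ := eq_of_stationary_rowObjective_le hk11 hk12 hR.le hx₀ hy₀
    (x := z 0 0) (y := z 0 1) (by linarith only [hmax, le₁ (z 1 0) (z 1 1)])
  obtain ⟨e10, e11⟩ := eq_of_stationary_rowObjective_le hk21 hk22 hR.le hx₁ hy₁
    (x := z 1 0) (y := z 1 1) (by linarith only [hmax, le₀ (z 0 0) (z 0 1)])
  ext i j
  fin_cases i <;> fin_cases j
  exacts [e00, e01, e10, e11]
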